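/- arXiv:1911.05398 — 2 statements merged into one kernel-verified Lean document; each statement's English description precedes it below -/
import Mathlib

section
/- (Unconditional global stability of the alternative scheme.) Let I = ℝ/ℤ, J ≥ 3, h = 1/J, Δt > 0, M ∈ ℕ, and let X⁰, X¹, …, X^M ∈ [V^h]² be such that for each m = 0,…,M−1, ((X^m·e₁)² D_t X^{m+1}, η |X^m_ρ|²) + ((X^m·e₁)² X^{m+1}_ρ, η_ρ) + (X^{m+1}·e₁, η·e₁ |X^{m+1}_ρ|²) = 0 for all η ∈ [V^h]², where D_t X^{m+1} = (X^{m+1} − X^m)/Δt. Then for every n ∈ {0,…,M−1}: ½ ((X^{n+1}·e₁)², |X^{n+1}_ρ|²) + Δt ∑_{m=0}^{n} ((X^m·e₁)² |D_t X^{m+1}|², |X^m_ρ|²) ≤ ½ ((X⁰·e₁)², |X⁰_ρ|²). -/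
/-! Testing the scheme with `η = X^{m+1} - X^m` and using `2a(a - b) = a² - b² + (a - b)²`, both
for the derivative term `((X^m·e₁)² X^{m+1}_ρ, X^{m+1}_ρ - X^m_ρ)` and for the curvature term
`(X^{m+1}·e₁, (X^{m+1} - X^m)·e₁ |X^{m+1}_ρ|²)`, shows pointwise that each step lowers
`½ ((X·e₁)², |X_ρ|²)` by at least `Δt ((X^m·e₁)² |D_t X^{m+1}|², |X^m_ρ|²)`; summing telescopes.
Finite element functions are bounded with a.e. bounded derivative, so every integral involved is
finite. -/

open MeasureTheory Real Set
open scoped RealInnerProductSpace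

noncomputable section

abbrev E2 := EuclideanSpace ℝ (Fin 2)

def e1 : E2 := EuclideanSpace.single 0 1

/-- The periodic piecewise affine finite element space `[V^h]²`: continuous 1-periodic
functions that are affine on each subinterval `[j/J, (j+1)/J]` of `[0,1]`. -/
def Vh (J : ℕ) : Set (ℝ → E2) :=
  {f | Continuous f ∧ Function.Periodic f 1 ∧
    ∀ j : ℕ, j < J → ∃ a b : E2,
      ∀ ρ ∈ Set.Icc ((j : ℝ)/J) (((j : ℝ)+1)/J), f ρ = a + ρ • b}

/-- The scheme form of `(Q^{h,Δt})`: `((X^m·e₁)² D_t X^{m+1}, η |X^m_ρ|²)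
+ ((X^m·e₁)² X^{m+1}_ρ, η_ρ) + (X^{m+1}·e₁, η·e₁ |X^{m+1}_ρ|²)`. -/
def Qform (Δt : ℝ) (Xm Xnew η : ℝ → E2) : ℝ :=
  ∫ ρ in (0:ℝ)..1,
    (⟪Xm ρ, e1⟫^2 * ⟪Δt⁻¹ • (Xnew ρ - Xm ρ), η ρ⟫ * ‖deriv Xm ρ‖^2
      + ⟪Xm ρ, e1⟫^2 * ⟪deriv Xnew ρ, deriv η ρ⟫
      + ⟪Xnew ρ, e1⟫ * ⟪η ρ, e1⟫ * ‖deriv Xnew ρ‖^2)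

open Filter

lemma Continuous.integrable_comp_of_ae_norm_le {α F E : Type*} [MeasurableSpace α]
    {μ : Measure α} [IsFiniteMeasure μ] [NormedAddCommGroup F] [ProperSpace F]
    [NormedAddCommGroup E] {G : F → E} (hG : Continuous G) {φ : α → F}
    (hφ : AEStronglyMeasurable φ μ) {C : ℝ} (hC : ∀ᵐ x ∂μ, ‖φ x‖ ≤ C) :
    Integrable (fun x => G (φ x)) μ := by
  obtain ⟨B, hB⟩ := (isCompact_closedBall (0 : F) C).exists_bound_of_continuousOn hG.continuousOn
  exact .of_bound (hG.comp_aestronglyMeasurable hφ) B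
    (hC.mono fun x hx => hB _ (mem_closedBall_zero_iff.2 hx))

lemma sub_mem_Vh {J : ℕ} {f g : ℝ → E2} (hf : f ∈ Vh J) (hg : g ∈ Vh J) : f - g ∈ Vh J := by
  obtain ⟨hfc, hfp, hfa⟩ := hf
  obtain ⟨hgc, hgp, hga⟩ := hg
  refine ⟨hfc.sub hgc, hfp.sub hgp, fun j hj => ?_⟩
  obtain ⟨a₁, b₁, h₁⟩ := hfa j hj
  obtain ⟨a₂, b₂, h₂⟩ := hga j hj
  refine ⟨a₁ - a₂, b₁ - b₂, fun ρ hρ => ?_⟩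
  rw [Pi.sub_apply, h₁ ρ hρ, h₂ ρ hρ, smul_sub]
  abel

lemma ae_exists_mem_Ioo_div {J : ℕ} (hJ : 0 < J) :
    ∀ᵐ ρ : ℝ, ρ ∈ Icc (0 : ℝ) 1 → ∃ j < J, ρ ∈ Ioo ((j : ℝ) / J) (((j : ℝ) + 1) / J) := by
  filter_upwards [(countable_range fun k : ℕ => (k : ℝ) / J).ae_notMem volume]
    with ρ hρ ⟨h0, h1⟩
  have hJ' : (0 : ℝ) < J := by exact_mod_cast hJ
  have hne : ∀ k : ℕ, (k : ℝ) ≠ ρ * J := fun k hk =>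
    hρ ⟨k, show (k : ℝ) / J = ρ by rw [hk, mul_div_cancel_right₀ _ hJ'.ne']⟩
  have hfloor : (⌊ρ * J⌋₊ : ℝ) < ρ * J :=
    (Nat.floor_le (by positivity)).lt_of_ne (hne _)
  refine ⟨⌊ρ * J⌋₊, ?_, (div_lt_iff₀ hJ').2 hfloor, (lt_div_iff₀ hJ').2 (Nat.lt_floor_add_one _)⟩
  have hρJ : ρ * J ≤ J := by nlinarith
  exact_mod_cast hfloor.trans_le hρJ

lemma exists_ae_bound_of_mem_Vh {J : ℕ} (hJ : 0 < J) {f : ℝ → E2} (hf : f ∈ Vh J) :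
    ∃ C, ∀ᵐ ρ : ℝ, ρ ∈ Icc (0 : ℝ) 1 →
      ‖f ρ‖ ≤ C ∧ DifferentiableAt ℝ f ρ ∧ ‖deriv f ρ‖ ≤ C := by
  choose a b hab using hf.2.2
  obtain ⟨C, hC⟩ := isCompact_Icc.exists_bound_of_continuousOn hf.1.continuousOn
  obtain ⟨B, hB⟩ := (finite_range fun i : Fin J => ‖b i i.2‖).bddAbove
  refine ⟨max C B, ?_⟩
  filter_upwards [ae_exists_mem_Ioo_div hJ] with ρ hρ hρI
  obtain ⟨j, hj, hmem⟩ := hρ hρI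
  have hderiv : HasDerivAt f (b j hj) ρ := by
    have haff : HasDerivAt (fun x : ℝ => a j hj + x • b j hj) (b j hj) ρ := by
      simpa using ((hasDerivAt_id ρ).smul_const (b j hj)).const_add (a j hj)
    exact haff.congr_of_eventuallyEq <| eventually_of_mem (Ioo_mem_nhds hmem.1 hmem.2)
      fun x hx => hab j hj x (Ioo_subset_Icc_self hx)
  refine ⟨(hC ρ hρI).trans (le_max_left _ _), hderiv.differentiableAt, ?_⟩
  rw [hderiv.deriv]
  exact (hB ⟨⟨j, hj⟩, rfl⟩).trans (le_max_right _ _)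

lemma intervalIntegrable_comp_of_mem_Vh {J : ℕ} (hJ : 0 < J) {f g : ℝ → E2}
    (hf : f ∈ Vh J) (hg : g ∈ Vh J) {G : E2 × E2 × E2 × E2 → ℝ} (hG : Continuous G) :
    IntervalIntegrable (fun ρ => G (f ρ, g ρ, deriv f ρ, deriv g ρ)) volume 0 1 := by
  obtain ⟨Cf, hCf⟩ := exists_ae_bound_of_mem_Vh hJ hf
  obtain ⟨Cg, hCg⟩ := exists_ae_bound_of_mem_Vh hJ hg
  rw [intervalIntegrable_iff_integrableOn_Ioc_of_le zero_le_one]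
  refine hG.integrable_comp_of_ae_norm_le (C := max Cf Cg)
    (hf.1.measurable.prodMk <| hg.1.measurable.prodMk <|
      (measurable_deriv f).prodMk (measurable_deriv g)).aestronglyMeasurable ?_
  refine (ae_restrict_iff' measurableSet_Ioc).2 ?_
  filter_upwards [hCf, hCg] with ρ hf' hg' hρ
  obtain ⟨hf₀, -, hf₁⟩ := hf' (Ioc_subset_Icc_self hρ)
  obtain ⟨hg₀, -, hg₁⟩ := hg' (Ioc_subset_Icc_self hρ)
  simp only [norm_prod_le_iff]
  exact ⟨le_max_of_le_left hf₀, le_max_of_le_right hg₀, le_max_of_le_left hf₁,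
    le_max_of_le_right hg₁⟩

lemma Qform_sub_eq {J : ℕ} (hJ : 0 < J) {Δt : ℝ} {f g : ℝ → E2} (hf : f ∈ Vh J)
    (hg : g ∈ Vh J) :
    Qform Δt f g (g - f) = ∫ ρ in (0:ℝ)..1,
      (⟪f ρ, e1⟫ ^ 2 * ⟪Δt⁻¹ • (g ρ - f ρ), g ρ - f ρ⟫ * ‖deriv f ρ‖ ^ 2
        + ⟪f ρ, e1⟫ ^ 2 * ⟪deriv g ρ, deriv g ρ - deriv f ρ⟫
        + ⟪g ρ, e1⟫ * ⟪g ρ - f ρ, e1⟫ * ‖deriv g ρ‖ ^ 2) := by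
  obtain ⟨Cf, hCf⟩ := exists_ae_bound_of_mem_Vh hJ hf
  obtain ⟨Cg, hCg⟩ := exists_ae_bound_of_mem_Vh hJ hg
  refine intervalIntegral.integral_congr_ae ?_
  filter_upwards [hCf, hCg] with ρ hf' hg' hρ
  have hρ' : ρ ∈ Icc (0 : ℝ) 1 := Ioc_subset_Icc_self (by simpa using hρ)
  have hderiv : deriv (g - f) ρ = deriv g ρ - deriv f ρ :=
    ((hg' hρ').2.1.hasDerivAt.sub (hf' hρ').2.1.hasDerivAt).deriv
  simp only [hderiv, Pi.sub_apply]

lemma energy_integrand_le_scheme_integrand {V : Type*} [NormedAddCommGroup V]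
    [InnerProductSpace ℝ V] (c : ℝ) (e u v p q : V) :
    c * (⟪u, e⟫ ^ 2 * ‖c⁻¹ • (v - u)‖ ^ 2 * ‖p‖ ^ 2) + (1 / 2) * (⟪v, e⟫ ^ 2 * ‖q‖ ^ 2)
        - (1 / 2) * (⟪u, e⟫ ^ 2 * ‖p‖ ^ 2)
      ≤ ⟪u, e⟫ ^ 2 * ⟪c⁻¹ • (v - u), v - u⟫ * ‖p‖ ^ 2 + ⟪u, e⟫ ^ 2 * ⟪q, q - p⟫
        + ⟪v, e⟫ * ⟪v - u, e⟫ * ‖q‖ ^ 2 := by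
  have hc : c * (c ^ 2)⁻¹ = c⁻¹ := by
    rcases eq_or_ne c 0 with rfl | hc
    · simp
    · field_simp
  rw [real_inner_smul_left, real_inner_self_eq_norm_sq, norm_smul, norm_inv, Real.norm_eq_abs,
    mul_pow, inv_pow, sq_abs, inner_sub_right, real_inner_self_eq_norm_sq, inner_sub_left]
  have hΔ : c * (⟪u, e⟫ ^ 2 * ((c ^ 2)⁻¹ * ‖v - u‖ ^ 2) * ‖p‖ ^ 2)
      = ⟪u, e⟫ ^ 2 * (c⁻¹ * ‖v - u‖ ^ 2) * ‖p‖ ^ 2 := by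
    rw [← hc]; ring
  rw [hΔ]
  nlinarith [norm_sub_sq_real q p, mul_nonneg (sq_nonneg ⟪u, e⟫) (sq_nonneg ‖q - p‖),
    mul_nonneg (sq_nonneg (⟪v, e⟫ - ⟪u, e⟫)) (sq_nonneg ‖q‖)]

lemma add_mul_sum_range_le_of_step {E G : ℕ → ℝ} {c : ℝ} {M : ℕ}
    (h : ∀ m < M, c * G m + E (m + 1) ≤ E m) :
    ∀ n ≤ M, E n + c * ∑ m ∈ Finset.range n, G m ≤ E 0 := by
  intro n hn
  have hsum : ∑ m ∈ Finset.range n, c * G m ≤ ∑ m ∈ Finset.range n, (E m - E (m + 1)) :=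
    Finset.sum_le_sum fun m hm => by linarith [h m (by simp at hm; omega)]
  rw [Finset.sum_range_sub'] at hsum
  rw [Finset.mul_sum]
  linarith

def energy (f : ℝ → E2) : ℝ :=
  ∫ ρ in (0:ℝ)..1, ⟪f ρ, e1⟫ ^ 2 * ‖deriv f ρ‖ ^ 2

def dissipation (Δt : ℝ) (f g : ℝ → E2) : ℝ :=
  ∫ ρ in (0:ℝ)..1, ⟪f ρ, e1⟫ ^ 2 * ‖Δt⁻¹ • (g ρ - f ρ)‖ ^ 2 * ‖deriv f ρ‖ ^ 2

lemma energy_step {J : ℕ} (hJ : 0 < J) {Δt : ℝ} {f g : ℝ → E2} (hf : f ∈ Vh J) (hg : g ∈ Vh J)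
    (hQ : Qform Δt f g (g - f) = 0) :
    Δt * dissipation Δt f g + (1 / 2) * energy g ≤ (1 / 2) * energy f := by
  have hD : IntervalIntegrable (fun ρ => ⟪f ρ, e1⟫ ^ 2 * ‖Δt⁻¹ • (g ρ - f ρ)‖ ^ 2 *
      ‖deriv f ρ‖ ^ 2) volume 0 1 :=
    intervalIntegrable_comp_of_mem_Vh hJ hf hg
      (G := fun x => ⟪x.1, e1⟫ ^ 2 * ‖Δt⁻¹ • (x.2.1 - x.1)‖ ^ 2 * ‖x.2.2.1‖ ^ 2) (by fun_prop)
  have hEf : IntervalIntegrable (fun ρ => ⟪f ρ, e1⟫ ^ 2 * ‖deriv f ρ‖ ^ 2) volume 0 1 :=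
    intervalIntegrable_comp_of_mem_Vh hJ hf hg
      (G := fun x => ⟪x.1, e1⟫ ^ 2 * ‖x.2.2.1‖ ^ 2) (by fun_prop)
  have hEg : IntervalIntegrable (fun ρ => ⟪g ρ, e1⟫ ^ 2 * ‖deriv g ρ‖ ^ 2) volume 0 1 :=
    intervalIntegrable_comp_of_mem_Vh hJ hf hg
      (G := fun x => ⟪x.2.1, e1⟫ ^ 2 * ‖x.2.2.2‖ ^ 2) (by fun_prop)
  have hQi : IntervalIntegrable (fun ρ =>
      ⟪f ρ, e1⟫ ^ 2 * ⟪Δt⁻¹ • (g ρ - f ρ), g ρ - f ρ⟫ * ‖deriv f ρ‖ ^ 2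
        + ⟪f ρ, e1⟫ ^ 2 * ⟪deriv g ρ, deriv g ρ - deriv f ρ⟫
        + ⟪g ρ, e1⟫ * ⟪g ρ - f ρ, e1⟫ * ‖deriv g ρ‖ ^ 2) volume 0 1 :=
    intervalIntegrable_comp_of_mem_Vh hJ hf hg
      (G := fun x => ⟪x.1, e1⟫ ^ 2 * ⟪Δt⁻¹ • (x.2.1 - x.1), x.2.1 - x.1⟫ * ‖x.2.2.1‖ ^ 2
        + ⟪x.1, e1⟫ ^ 2 * ⟪x.2.2.2, x.2.2.2 - x.2.2.1⟫
        + ⟪x.2.1, e1⟫ * ⟪x.2.1 - x.1, e1⟫ * ‖x.2.2.2‖ ^ 2) (by fun_prop)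
  rw [← sub_nonpos]
  calc Δt * dissipation Δt f g + (1 / 2) * energy g - (1 / 2) * energy f
      = ∫ ρ in (0:ℝ)..1, (Δt * (⟪f ρ, e1⟫ ^ 2 * ‖Δt⁻¹ • (g ρ - f ρ)‖ ^ 2 * ‖deriv f ρ‖ ^ 2)
          + (1 / 2) * (⟪g ρ, e1⟫ ^ 2 * ‖deriv g ρ‖ ^ 2)
          - (1 / 2) * (⟪f ρ, e1⟫ ^ 2 * ‖deriv f ρ‖ ^ 2)) := by
        rw [intervalIntegral.integral_sub ((hD.const_mul _).add (hEg.const_mul _))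
          (hEf.const_mul _), intervalIntegral.integral_add (hD.const_mul _) (hEg.const_mul _),
          intervalIntegral.integral_const_mul, intervalIntegral.integral_const_mul,
          intervalIntegral.integral_const_mul, dissipation, energy, energy]
    _ ≤ Qform Δt f g (g - f) := by
        rw [Qform_sub_eq hJ hf hg]
        refine intervalIntegral.integral_mono_ae zero_le_one
          (((hD.const_mul _).add (hEg.const_mul _)).sub (hEf.const_mul _)) hQi
          (ae_of_all _ fun ρ => ?_)
        exact energy_integrand_le_scheme_integrand Δt e1 (f ρ) (g ρ) (deriv f ρ) (deriv g ρ)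
    _ = 0 := hQ

theorem global_stability_general
    (J : ℕ) (hJ : 3 ≤ J) (Δt : ℝ) (M : ℕ)
    (X : ℕ → ℝ → E2) (hX : ∀ m ≤ M, X m ∈ Vh J)
    (hscheme : ∀ m : ℕ, m < M → ∀ η ∈ Vh J, Qform Δt (X m) (X (m+1)) η = 0) :
    ∀ n : ℕ, n < M →
      (1/2) * (∫ ρ in (0:ℝ)..1, ⟪X (n+1) ρ, e1⟫^2 * ‖deriv (X (n+1)) ρ‖^2)
        + Δt * ∑ m ∈ Finset.range (n+1),
            ∫ ρ in (0:ℝ)..1,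
              ⟪X m ρ, e1⟫^2 * ‖Δt⁻¹ • (X (m+1) ρ - X m ρ)‖^2 * ‖deriv (X m) ρ‖^2
      ≤ (1/2) * (∫ ρ in (0:ℝ)..1, ⟪X 0 ρ, e1⟫^2 * ‖deriv (X 0) ρ‖^2) := by
  have hstep : ∀ m < M, Δt * dissipation Δt (X m) (X (m + 1)) + (1 / 2) * energy (X (m + 1))
      ≤ (1 / 2) * energy (X m) := fun m hm =>
    have hXm := hX m hm.le
    have hXm' := hX (m + 1) hm
    energy_step (by omega) hXm hXm' (hscheme m hm _ (sub_mem_Vh hXm' hXm))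
  intro n hn
  exact add_mul_sum_range_le_of_step (E := fun m => (1 / 2) * energy (X m))
    (G := fun m => dissipation Δt (X m) (X (m + 1))) hstep (n + 1) hn

theorem global_stability
    (J : ℕ) (hJ : 3 ≤ J) (Δt : ℝ) (hΔt : 0 < Δt) (M : ℕ)
    (X : ℕ → ℝ → E2) (hX : ∀ m ≤ M, X m ∈ Vh J)
    (hscheme : ∀ m : ℕ, m < M → ∀ η ∈ Vh J, Qform Δt (X m) (X (m+1)) η = 0) :
    ∀ n : ℕ, n < M →
      (1/2) * (∫ ρ in (0:ℝ)..1, ⟪X (n+1) ρ, e1⟫^2 * ‖deriv (X (n+1)) ρ‖^2)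
        + Δt * ∑ m ∈ Finset.range (n+1),
            ∫ ρ in (0:ℝ)..1,
              ⟪X m ρ, e1⟫^2 * ‖Δt⁻¹ • (X (m+1) ρ - X m ρ)‖^2 * ‖deriv (X m) ρ‖^2
      ≤ (1/2) * (∫ ρ in (0:ℝ)..1, ⟪X 0 ρ, e1⟫^2 * ‖deriv (X 0) ρ‖^2) :=
  global_stability_general J hJ Δt M X hX hscheme
end
end

section
/- (Energy decay for the alternative formulation.) Let I = ℝ/ℤ, T > 0, and let x : I × [0,T] → ℝ² be such that x, x_ρ, x_ρρ, x_t and x_tρ exist and are continuous, and x solves the alternative system (x·e₁)² |x_ρ|² x_t − ((x·e₁)² x_ρ)_ρ + (x·e₁) |x_ρ|² e₁ = 0 on I × [0,T]. Then for every t ∈ [0,T], (d/dt) ½ ∫₀¹ (x·e₁)² |x_ρ|² dρ = −∫₀¹ (x·e₁)² |x_t|² |x_ρ|² dρ ≤ 0; in particular t ↦ ∫₀¹ (x·e₁)² |x_ρ|² dρ is non-increasing on [0,T]. -/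
/-! Pairing the equation with `x_t` shows that the time derivative of the energy density
`½ (x·e₁)² |x_ρ|²` equals `∂_ρ ((x·e₁)² ⟪x_ρ, x_t⟫) − (x·e₁)² |x_t|² |x_ρ|²`; the flux term
integrates to zero over a period, so the energy decreases at the rate of the nonnegative
dissipation. Differentiation under the integral sign is justified by writing the integral as its
initial value plus the time integral of the integrated rate (Fubini); the same device yields the
symmetry `(x_t)_ρ = (x_ρ)_t` of the mixed partials. -/

open MeasureTheory Real Set
open scoped RealInnerProductSpace

noncomputable section

section Slices

variable {X : Type*} [TopologicalSpace X] {F : ℝ → ℝ → X} {s : Set ℝ}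

theorem ContinuousOn.continuous_curry_right
    (hF : ContinuousOn (fun p : ℝ × ℝ => F p.1 p.2) (univ ×ˢ s)) {t : ℝ} (ht : t ∈ s) :
    Continuous fun ρ => F ρ t :=
  hF.comp_continuous (continuous_id.prodMk continuous_const) fun _ => ⟨trivial, ht⟩

theorem ContinuousOn.continuousOn_curry_left
    (hF : ContinuousOn (fun p : ℝ × ℝ => F p.1 p.2) (univ ×ˢ s)) (ρ : ℝ) :
    ContinuousOn (F ρ) s :=
  hF.comp (continuous_const.prodMk continuous_id).continuousOn fun _ hτ => ⟨trivial, hτ⟩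

end Slices

section ParametricIntegral

variable {E : Type*} [NormedAddCommGroup E] [NormedSpace ℝ E]

theorem continuousOn_intervalIntegral_of_continuousOn_prod {F : ℝ → ℝ → E} {a b : ℝ}
    (hF : ContinuousOn (fun p : ℝ × ℝ => F p.1 p.2) (univ ×ˢ Icc a b)) (c d : ℝ) :
    ContinuousOn (fun τ => ∫ ρ in c..d, F ρ τ) (Icc a b) := by
  rcases lt_or_ge b a with hba | hab
  · simp [Icc_eq_empty_of_lt hba]
  have hcomp : Continuous fun p : ℝ × ℝ => F p.2 (projIcc a b hab p.1) :=
    hF.comp_continuous (f := fun p : ℝ × ℝ => (p.2, (projIcc a b hab p.1 : ℝ))) (by fun_prop)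
      fun p => ⟨trivial, (projIcc a b hab p.1).2⟩
  have hext : Continuous fun τ => ∫ ρ in c..d, F ρ (projIcc a b hab τ) :=
    intervalIntegral.continuous_parametric_intervalIntegral_of_continuous' hcomp c d
  exact hext.continuousOn.congr fun τ hτ => by simp [projIcc_of_mem hab hτ]

theorem integral_eq_sub_of_hasDerivWithinAt_Icc [CompleteSpace E] {f f' : ℝ → E} {a b t : ℝ}
    (hf : ∀ τ ∈ Icc a b, HasDerivWithinAt f (f' τ) (Icc a b) τ)
    (hf' : ContinuousOn f' (Icc a b)) (ht : t ∈ Icc a b) :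
    ∫ τ in a..t, f' τ = f t - f a := by
  have hsub : Icc a t ⊆ Icc a b := Icc_subset_Icc_right ht.2
  refine intervalIntegral.integral_eq_sub_of_hasDerivAt_of_le ht.1
    (fun τ hτ => ((hf τ (hsub hτ)).continuousWithinAt).mono hsub) (fun τ hτ => ?_)
    ((hf'.mono hsub).intervalIntegrable_of_Icc ht.1)
  exact (hf τ (hsub (Ioo_subset_Icc_self hτ))).hasDerivAt
    (Icc_mem_nhds hτ.1 (hτ.2.trans_le ht.2))

theorem hasDerivWithinAt_intervalIntegral_of_continuousOn [CompleteSpace E] {F F' : ℝ → ℝ → E}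
    {a b c d t : ℝ}
    (hF : ∀ ρ, ∀ τ ∈ Icc a b, HasDerivWithinAt (F ρ) (F' ρ τ) (Icc a b) τ)
    (hF_cont : ContinuousOn (fun p : ℝ × ℝ => F p.1 p.2) (univ ×ˢ Icc a b))
    (hF'_cont : ContinuousOn (fun p : ℝ × ℝ => F' p.1 p.2) (univ ×ˢ Icc a b))
    (ht : t ∈ Icc a b) :
    HasDerivWithinAt (fun τ => ∫ ρ in c..d, F ρ τ) (∫ ρ in c..d, F' ρ t) (Icc a b) t := by
  set G := fun τ => ∫ ρ in c..d, F' ρ τ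
  have hG : ContinuousOn G (Icc a b) :=
    continuousOn_intervalIntegral_of_continuousOn_prod hF'_cont c d
  have ha : a ∈ Icc a b := left_mem_Icc.2 (ht.1.trans ht.2)
  have hincr : ∀ τ ∈ Icc a b,
      ∫ ρ in c..d, F ρ τ = (∫ ρ in c..d, F ρ a) + ∫ s in a..τ, G s := by
    intro τ hτ
    have hsub : uIcc a τ ⊆ Icc a b := by
      rw [uIcc_of_le hτ.1]; exact Icc_subset_Icc_right hτ.2
    rw [← sub_eq_iff_eq_add', ← intervalIntegral.integral_sub
      ((hF_cont.continuous_curry_right hτ).intervalIntegrable c d)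
      ((hF_cont.continuous_curry_right ha).intervalIntegrable c d)]
    calc ∫ ρ in c..d, F ρ τ - F ρ a = ∫ ρ in c..d, ∫ s in a..τ, F' ρ s :=
          intervalIntegral.integral_congr fun ρ _ => (integral_eq_sub_of_hasDerivWithinAt_Icc
            (hF ρ) (hF'_cont.continuousOn_curry_left ρ) hτ).symm
      _ = ∫ s in a..τ, G s :=
          intervalIntegral_intervalIntegral_swap <|
            ((hF'_cont.mono (prod_mono (subset_univ _) hsub)).integrableOn_compact
              (isCompact_uIcc.prod isCompact_uIcc)).mono_set
              (prod_mono uIoc_subset_uIcc uIoc_subset_uIcc)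
  -- provides the `FTCFilter` instance for derivatives within `Icc a b` at `t`
  have : Fact (t ∈ Icc a b) := ⟨ht⟩
  have hprim : HasDerivWithinAt (fun τ => ∫ s in a..τ, G s) (G t) (Icc a b) t :=
    intervalIntegral.integral_hasDerivWithinAt_right
      ((hG.mono (Icc_subset_Icc_right ht.2)).intervalIntegrable_of_Icc ht.1)
      (hG.stronglyMeasurableAtFilter_nhdsWithin measurableSet_Icc t) (hG t ht)
  exact (hprim.const_add _).congr hincr (hincr t ht)

theorem hasDerivAt_mixed_partial [CompleteSpace E] {x xρ xt xtρ : ℝ → ℝ → E} {a b : ℝ}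
    (hab : a < b)
    (hdρ : ∀ ρ, ∀ t ∈ Icc a b, HasDerivAt (fun s => x s t) (xρ ρ t) ρ)
    (hdt : ∀ ρ, ∀ t ∈ Icc a b, HasDerivWithinAt (x ρ) (xt ρ t) (Icc a b) t)
    (hdtρ : ∀ ρ, ∀ t ∈ Icc a b, HasDerivWithinAt (xρ ρ) (xtρ ρ t) (Icc a b) t)
    (hcontρ : ContinuousOn (fun p : ℝ × ℝ => xρ p.1 p.2) (univ ×ˢ Icc a b))
    (hconttρ : ContinuousOn (fun p : ℝ × ℝ => xtρ p.1 p.2) (univ ×ˢ Icc a b))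
    (ρ : ℝ) {t : ℝ} (ht : t ∈ Icc a b) :
    HasDerivAt (fun s => xt s t) (xtρ ρ t) ρ := by
  have hxt : ∀ r, xt r t = xt 0 t + ∫ s in (0:ℝ)..r, xtρ s t := by
    intro r
    have hx : ∀ τ ∈ Icc a b, ∫ s in (0:ℝ)..r, xρ s τ = x r τ - x 0 τ := fun τ hτ =>
      intervalIntegral.integral_eq_sub_of_hasDerivAt (fun s _ => hdρ s τ hτ)
        ((hcontρ.continuous_curry_right hτ).intervalIntegrable 0 r)
    have hint : HasDerivWithinAt (fun τ => ∫ s in (0:ℝ)..r, xρ s τ)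
        (∫ s in (0:ℝ)..r, xtρ s t) (Icc a b) t :=
      hasDerivWithinAt_intervalIntegral_of_continuousOn hdtρ hcontρ hconttρ ht
    have hdiff : HasDerivWithinAt (fun τ => ∫ s in (0:ℝ)..r, xρ s τ)
        (xt r t - xt 0 t) (Icc a b) t :=
      ((hdt r t ht).sub (hdt 0 t ht)).congr hx (hx t ht)
    rw [← (uniqueDiffOn_Icc hab t ht).eq_deriv _ hdiff hint]
    abel
  have hcont : Continuous fun s => xtρ s t := hconttρ.continuous_curry_right ht
  have hprim : HasDerivAt (fun r => ∫ s in (0:ℝ)..r, xtρ s t) (xtρ ρ t) ρ :=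
    intervalIntegral.integral_hasDerivAt_right (hcont.intervalIntegrable _ _)
      (hcont.stronglyMeasurableAtFilter _ _) hcont.continuousAt
  exact (hprim.const_add (xt 0 t)).congr_of_eventuallyEq (Filter.Eventually.of_forall hxt)

end ParametricIntegral

theorem HasDerivAt.eq_of_periodic {E : Type*} [NormedAddCommGroup E] [NormedSpace ℝ E]
    {f : ℝ → E} {f₁' f₂' : E} {c x : ℝ} (hf : Function.Periodic f c)
    (h₁ : HasDerivAt f f₁' (x + c)) (h₂ : HasDerivAt f f₂' x) : f₁' = f₂' := by
  have h : HasDerivAt (fun s => f (s + c)) f₁' x := h₁.comp_add_const x c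
  rw [show (fun s => f (s + c)) = f from funext hf] at h
  exact h.unique h₂

section Energy

variable {V : Type*} [NormedAddCommGroup V] [InnerProductSpace ℝ V]

theorem energy_rate_eq_flux_deriv_sub_dissipation {X Xρ Xρρ Xt Xtρ e : V}
    (hpde : (⟪X, e⟫ ^ 2 * ‖Xρ‖ ^ 2) • Xt - ((2 * ⟪X, e⟫ * ⟪Xρ, e⟫) • Xρ + ⟪X, e⟫ ^ 2 • Xρρ)
      + (⟪X, e⟫ * ‖Xρ‖ ^ 2) • e = 0) :
    ⟪X, e⟫ * ⟪Xt, e⟫ * ‖Xρ‖ ^ 2 + ⟪X, e⟫ ^ 2 * ⟪Xρ, Xtρ⟫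
      = (2 * ⟪X, e⟫ * ⟪Xρ, e⟫ * ⟪Xρ, Xt⟫ + ⟪X, e⟫ ^ 2 * (⟪Xρ, Xtρ⟫ + ⟪Xρρ, Xt⟫))
        - ⟪X, e⟫ ^ 2 * ‖Xt‖ ^ 2 * ‖Xρ‖ ^ 2 := by
  have h := congrArg (fun v => ⟪v, Xt⟫) hpde
  simp only [inner_sub_left, inner_add_left, real_inner_smul_left, inner_zero_left,
    real_inner_self_eq_norm_sq, real_inner_comm Xt e] at h
  linear_combination h

theorem integral_energy_rate_eq_neg_dissipation {X Xρ Xρρ Xt Xtρ : ℝ → V} {e : V} {a b : ℝ}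
    (hX : ∀ ρ, HasDerivAt X (Xρ ρ) ρ) (hXρ : ∀ ρ, HasDerivAt Xρ (Xρρ ρ) ρ)
    (hXt : ∀ ρ, HasDerivAt Xt (Xtρ ρ) ρ) (hXρρ_cont : Continuous Xρρ)
    (hXtρ_cont : Continuous Xtρ) (hX_per : X b = X a) (hXρ_per : Xρ b = Xρ a)
    (hXt_per : Xt b = Xt a)
    (hpde : ∀ ρ, (⟪X ρ, e⟫ ^ 2 * ‖Xρ ρ‖ ^ 2) • Xt ρ
      - ((2 * ⟪X ρ, e⟫ * ⟪Xρ ρ, e⟫) • Xρ ρ + ⟪X ρ, e⟫ ^ 2 • Xρρ ρ)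
      + (⟪X ρ, e⟫ * ‖Xρ ρ‖ ^ 2) • e = 0) :
    ∫ ρ in a..b, (⟪X ρ, e⟫ * ⟪Xt ρ, e⟫ * ‖Xρ ρ‖ ^ 2 + ⟪X ρ, e⟫ ^ 2 * ⟪Xρ ρ, Xtρ ρ⟫)
      = -∫ ρ in a..b, ⟪X ρ, e⟫ ^ 2 * ‖Xt ρ‖ ^ 2 * ‖Xρ ρ‖ ^ 2 := by
  have hX_cont : Continuous X := continuous_iff_continuousAt.2 fun ρ => (hX ρ).continuousAt
  have hXρ_cont : Continuous Xρ := continuous_iff_continuousAt.2 fun ρ => (hXρ ρ).continuousAt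
  have hXt_cont : Continuous Xt := continuous_iff_continuousAt.2 fun ρ => (hXt ρ).continuousAt
  have hflux : ∀ ρ, HasDerivAt (fun s => ⟪X s, e⟫ ^ 2 * ⟪Xρ s, Xt s⟫)
      (2 * ⟪X ρ, e⟫ * ⟪Xρ ρ, e⟫ * ⟪Xρ ρ, Xt ρ⟫
        + ⟪X ρ, e⟫ ^ 2 * (⟪Xρ ρ, Xtρ ρ⟫ + ⟪Xρρ ρ, Xt ρ⟫)) ρ := by
    intro ρ
    have hA : HasDerivAt (fun s => ⟪X s, e⟫) ⟪Xρ ρ, e⟫ ρ := by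
      simpa using (hX ρ).inner ℝ (hasDerivAt_const ρ e)
    refine ((hA.fun_pow 2).mul ((hXρ ρ).inner ℝ (hXt ρ))).congr_deriv ?_
    ring
  have hflux_cont : Continuous fun ρ => 2 * ⟪X ρ, e⟫ * ⟪Xρ ρ, e⟫ * ⟪Xρ ρ, Xt ρ⟫
      + ⟪X ρ, e⟫ ^ 2 * (⟪Xρ ρ, Xtρ ρ⟫ + ⟪Xρρ ρ, Xt ρ⟫) := by fun_prop
  have hboundary : ∫ ρ in a..b, (2 * ⟪X ρ, e⟫ * ⟪Xρ ρ, e⟫ * ⟪Xρ ρ, Xt ρ⟫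
      + ⟪X ρ, e⟫ ^ 2 * (⟪Xρ ρ, Xtρ ρ⟫ + ⟪Xρρ ρ, Xt ρ⟫)) = 0 := by
    rw [intervalIntegral.integral_eq_sub_of_hasDerivAt (fun ρ _ => hflux ρ)
      (hflux_cont.intervalIntegrable a b), hX_per, hXρ_per, hXt_per, sub_self]
  rw [intervalIntegral.integral_congr fun ρ _ =>
      energy_rate_eq_flux_deriv_sub_dissipation (Xtρ := Xtρ ρ) (hpde ρ),
    intervalIntegral.integral_sub (hflux_cont.intervalIntegrable a b)
      ((by fun_prop : Continuous fun ρ => ⟪X ρ, e⟫ ^ 2 * ‖Xt ρ‖ ^ 2 * ‖Xρ ρ‖ ^ 2).intervalIntegrable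
        a b), hboundary, zero_sub]

theorem hasDerivWithinAt_integral_energy {x xρ xt xtρ : ℝ → ℝ → V} {e : V} {a b c d t : ℝ}
    (hdt : ∀ ρ, ∀ τ ∈ Icc a b, HasDerivWithinAt (x ρ) (xt ρ τ) (Icc a b) τ)
    (hdtρ : ∀ ρ, ∀ τ ∈ Icc a b, HasDerivWithinAt (xρ ρ) (xtρ ρ τ) (Icc a b) τ)
    (hcont : ContinuousOn (fun p : ℝ × ℝ => x p.1 p.2) (univ ×ˢ Icc a b))
    (hcontρ : ContinuousOn (fun p : ℝ × ℝ => xρ p.1 p.2) (univ ×ˢ Icc a b))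
    (hcontt : ContinuousOn (fun p : ℝ × ℝ => xt p.1 p.2) (univ ×ˢ Icc a b))
    (hconttρ : ContinuousOn (fun p : ℝ × ℝ => xtρ p.1 p.2) (univ ×ˢ Icc a b))
    (ht : t ∈ Icc a b) :
    HasDerivWithinAt (fun τ => ∫ ρ in c..d, ⟪x ρ τ, e⟫ ^ 2 * ‖xρ ρ τ‖ ^ 2)
      (2 * ∫ ρ in c..d, (⟪x ρ t, e⟫ * ⟪xt ρ t, e⟫ * ‖xρ ρ t‖ ^ 2
        + ⟪x ρ t, e⟫ ^ 2 * ⟪xρ ρ t, xtρ ρ t⟫)) (Icc a b) t := by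
  rw [← intervalIntegral.integral_const_mul]
  refine hasDerivWithinAt_intervalIntegral_of_continuousOn
    (F := fun ρ τ => ⟪x ρ τ, e⟫ ^ 2 * ‖xρ ρ τ‖ ^ 2)
    (F' := fun ρ τ => 2 * (⟪x ρ τ, e⟫ * ⟪xt ρ τ, e⟫ * ‖xρ ρ τ‖ ^ 2
      + ⟪x ρ τ, e⟫ ^ 2 * ⟪xρ ρ τ, xtρ ρ τ⟫)) (fun ρ τ hτ => ?_) (by fun_prop) (by fun_prop) ht
  have hA : HasDerivWithinAt (fun τ => ⟪x ρ τ, e⟫) ⟪xt ρ τ, e⟫ (Icc a b) τ := by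
    simpa using (hdt ρ τ hτ).inner ℝ (hasDerivWithinAt_const τ _ e)
  refine ((hA.fun_pow 2).mul (hdtρ ρ τ hτ).norm_sq).congr_deriv ?_
  ring

end Energy

theorem energy_decay_alternative_formulation
    (T : ℝ) (hT : 0 < T)
    (x xρ xρρ xt xtρ : ℝ → ℝ → E2)
    -- periodicity: functions on I = ℝ/ℤ are 1-periodic
    (hper : ∀ ρ t, x (ρ + 1) t = x ρ t)
    -- existence of the derivatives x_ρ, x_ρρ, x_t and x_tρ = (x_ρ)_t
    (hdρ : ∀ (ρ : ℝ), ∀ t ∈ Set.Icc (0:ℝ) T, HasDerivAt (fun s => x s t) (xρ ρ t) ρ)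
    (hdρρ : ∀ (ρ : ℝ), ∀ t ∈ Set.Icc (0:ℝ) T, HasDerivAt (fun s => xρ s t) (xρρ ρ t) ρ)
    (hdt : ∀ (ρ : ℝ), ∀ t ∈ Set.Icc (0:ℝ) T,
      HasDerivWithinAt (fun τ => x ρ τ) (xt ρ t) (Set.Icc 0 T) t)
    (hdtρ : ∀ (ρ : ℝ), ∀ t ∈ Set.Icc (0:ℝ) T,
      HasDerivWithinAt (fun τ => xρ ρ τ) (xtρ ρ t) (Set.Icc 0 T) t)
    -- continuity of x, x_ρ, x_ρρ, x_t, x_tρ on I × [0,T]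
    (hcont : ContinuousOn (fun p : ℝ × ℝ => x p.1 p.2) (Set.univ ×ˢ Set.Icc 0 T))
    (hcontρ : ContinuousOn (fun p : ℝ × ℝ => xρ p.1 p.2) (Set.univ ×ˢ Set.Icc 0 T))
    (hcontρρ : ContinuousOn (fun p : ℝ × ℝ => xρρ p.1 p.2) (Set.univ ×ˢ Set.Icc 0 T))
    (hcontt : ContinuousOn (fun p : ℝ × ℝ => xt p.1 p.2) (Set.univ ×ˢ Set.Icc 0 T))
    (hconttρ : ContinuousOn (fun p : ℝ × ℝ => xtρ p.1 p.2) (Set.univ ×ˢ Set.Icc 0 T))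
    -- x solves the alternative system
    -- (x·e₁)² |x_ρ|² x_t − ((x·e₁)² x_ρ)_ρ + (x·e₁)|x_ρ|² e₁ = 0,
    -- with ((x·e₁)² x_ρ)_ρ = 2(x·e₁)(x_ρ·e₁) x_ρ + (x·e₁)² x_ρρ
    (hpde : ∀ (ρ : ℝ), ∀ t ∈ Set.Icc (0:ℝ) T,
      (⟪x ρ t, e1⟫^2 * ‖xρ ρ t‖^2) • xt ρ t
        - ((2 * ⟪x ρ t, e1⟫ * ⟪xρ ρ t, e1⟫) • xρ ρ t + ⟪x ρ t, e1⟫^2 • xρρ ρ t)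
        + (⟪x ρ t, e1⟫ * ‖xρ ρ t‖^2) • e1 = 0) :
    (∀ t ∈ Set.Icc (0:ℝ) T,
      HasDerivWithinAt (fun τ => (1/2) * ∫ ρ in (0:ℝ)..1, ⟪x ρ τ, e1⟫^2 * ‖xρ ρ τ‖^2)
        (-(∫ ρ in (0:ℝ)..1, ⟪x ρ t, e1⟫^2 * ‖xt ρ t‖^2 * ‖xρ ρ t‖^2))
        (Set.Icc 0 T) t ∧
      -(∫ ρ in (0:ℝ)..1, ⟪x ρ t, e1⟫^2 * ‖xt ρ t‖^2 * ‖xρ ρ t‖^2) ≤ 0) ∧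
    AntitoneOn (fun τ => ∫ ρ in (0:ℝ)..1, ⟪x ρ τ, e1⟫^2 * ‖xρ ρ τ‖^2)
      (Set.Icc 0 T) := by
  have hx_per : x 1 = x 0 := funext fun τ => by simpa using hper 0 τ
  have hrate : ∀ t ∈ Icc (0:ℝ) T,
      HasDerivWithinAt (fun τ => ∫ ρ in (0:ℝ)..1, ⟪x ρ τ, e1⟫ ^ 2 * ‖xρ ρ τ‖ ^ 2)
        (2 * -∫ ρ in (0:ℝ)..1, ⟪x ρ t, e1⟫ ^ 2 * ‖xt ρ t‖ ^ 2 * ‖xρ ρ t‖ ^ 2) (Icc 0 T) t := by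
    intro t ht
    have hxρ_per : xρ 1 t = xρ 0 t := by
      simpa using HasDerivAt.eq_of_periodic (fun ρ => hper ρ t) (hdρ (0 + 1) t ht) (hdρ 0 t ht)
    have hxt_per : xt 1 t = xt 0 t :=
      (uniqueDiffOn_Icc hT t ht).eq_deriv _ (hx_per ▸ hdt 1 t ht) (hdt 0 t ht)
    rw [← integral_energy_rate_eq_neg_dissipation (fun ρ => hdρ ρ t ht)
      (fun ρ => hdρρ ρ t ht)
      (fun ρ => hasDerivAt_mixed_partial hT hdρ hdt hdtρ hcontρ hconttρ ρ ht)
      (hcontρρ.continuous_curry_right ht) (hconttρ.continuous_curry_right ht)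
      (congrFun hx_per t) hxρ_per hxt_per (fun ρ => hpde ρ t ht)]
    exact hasDerivWithinAt_integral_energy hdt hdtρ hcont hcontρ hcontt hconttρ ht
  have hdiss : ∀ t, 0 ≤ ∫ ρ in (0:ℝ)..1, ⟪x ρ t, e1⟫ ^ 2 * ‖xt ρ t‖ ^ 2 * ‖xρ ρ t‖ ^ 2 :=
    fun t => intervalIntegral.integral_nonneg zero_le_one fun _ _ => by positivity
  refine ⟨fun t ht => ⟨?_, neg_nonpos.2 (hdiss t)⟩, ?_⟩
  · exact ((hrate t ht).const_mul (1 / 2)).congr_deriv (by ring)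
  · refine antitoneOn_of_hasDerivWithinAt_nonpos (convex_Icc 0 T) (f' := fun t =>
      2 * -∫ ρ in (0:ℝ)..1, ⟪x ρ t, e1⟫ ^ 2 * ‖xt ρ t‖ ^ 2 * ‖xρ ρ t‖ ^ 2)
      (fun t ht => (hrate t ht).continuousWithinAt) (fun t ht => ?_) (fun t _ => ?_)
    · exact (hrate t (interior_subset ht)).mono interior_subset
    · linarith [hdiss t]
end
end
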